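/- arXiv:2006.09567 — 2 statements merged into one kernel-verified Lean document; each statement's English description precedes it below -/
import Mathlib

section
/- Let Ω be a finite set, μ a probability measure on Ω with μ(x) > 0 for every x ∈ Ω, and equip the space of functions f : Ω → ℂ with the weighted inner product ⟨f, g⟩ = ∑_{x∈Ω} μ(x) · conj(f(x)) · g(x). Let A be a linear operator on the subspace H = {f : Ω → ℂ : ∑_x μ(x) f(x) = 0} that is self-adjoint with respect to this inner product, and suppose that for some α > 0 one has α⟨f, A f⟩ ≥ ⟨f, f⟩ for all f ∈ H (scalar Poincaré inequality). Then for every d ≥ 1 and every matrix-valued function F : Ω → ℂ^{d×d} whose every entry (as a scalar function on Ω) lies in H, the Loewner inequality α · ∑_{x∈Ω} μ(x) F(x)* (A F)(x) ⪰ ∑_{x∈Ω} μ(x) F(x)* F(x) holds, where A F is defined by applying A entrywise to F and M ⪰ N means M − N is positive semidefinite. -/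
open Matrix
open scoped ComplexOrder

/-!
Pair both sides with a vector `v` and put `gᵢ = (F · *ᵥ v) i`. The `gᵢ` are mean-zero because the
entries of `F` are, and `v* (∑ μ F* (A F)) v = ∑ᵢ ⟨gᵢ, A gᵢ⟩`, `v* (∑ μ F* F) v = ∑ᵢ ⟨gᵢ, gᵢ⟩`; so the
quadratic form of the difference is `∑ᵢ (α⟨gᵢ, A gᵢ⟩ - ⟨gᵢ, gᵢ⟩) ≥ 0` by the scalar inequality.
Over `ℂ` a matrix with nonnegative quadratic form is automatically Hermitian.
-/

theorem Matrix.PosSemidef.of_dotProduct_mulVec_nonneg_complex {n : Type*} [Fintype n]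
    {M : Matrix n n ℂ} (hM : ∀ v, 0 ≤ star v ⬝ᵥ (M *ᵥ v)) : M.PosSemidef := by
  classical
  rw [← isPositive_toEuclideanLin_iff, LinearMap.isPositive_iff_complex]
  intro x
  set w := star x.ofLp ⬝ᵥ (M *ᵥ x.ofLp)
  obtain ⟨hw_re, hw_im⟩ : 0 ≤ w.re ∧ 0 = w.im := Complex.nonneg_iff.mp (hM x.ofLp)
  have hw : starRingEnd ℂ w = w := Complex.conj_eq_iff_im.mpr hw_im.symm
  have hinner : inner ℂ (M.toEuclideanLin x) x = w := by
    rw [← inner_conj_symm, EuclideanSpace.inner_eq_star_dotProduct, ofLp_toLpLin, toLin'_apply,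
      dotProduct_comm, hw]
  rw [hinner]
  exact ⟨Complex.conj_eq_iff_re.mp hw, hw_re⟩

theorem Matrix.sum_mul_mulVec_apply_eq_zero {Ω m n R : Type*} [Fintype Ω] [Fintype n]
    [CommSemiring R] (w : Ω → R) {F : Ω → Matrix m n R} (hF : ∀ i j, ∑ x, w x * F x i j = 0)
    (v : n → R) (i : m) :
    ∑ x, w x * (F x *ᵥ v) i = 0 := by
  simp only [mulVec, dotProduct, Finset.mul_sum, ← mul_assoc]
  rw [Finset.sum_comm]
  simp [← Finset.sum_mul, hF]

theorem Matrix.of_apply_entrywise_mulVec_apply {Ω m n : Type*} [Fintype n]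
    (B : (Ω → ℂ) →ₗ[ℂ] (Ω → ℂ)) (F : Ω → Matrix m n ℂ) (x : Ω) (v : n → ℂ) (i : m) :
    ((of fun i j => B (fun y => F y i j) x) *ᵥ v) i = B (fun y => (F y *ᵥ v) i) x := by
  have hlin : (fun y => (F y *ᵥ v) i) = ∑ j, v j • fun y => F y i j := by
    ext y
    simp [mulVec, dotProduct, mul_comm]
  rw [hlin, map_sum]
  simp [mulVec, dotProduct, mul_comm]

def weightedInner {Ω : Type*} [Fintype Ω] (μ : Ω → ℝ) (f g : Ω → ℂ) : ℂ :=
  ∑ x, (μ x : ℂ) * starRingEnd ℂ (f x) * g x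

theorem Matrix.star_dotProduct_sum_smul_conjTranspose_mul_mulVec {Ω m n : Type*} [Fintype Ω]
    [Fintype m] [Fintype n] (μ : Ω → ℝ) (F G : Ω → Matrix m n ℂ) (v : n → ℂ) :
    star v ⬝ᵥ ((∑ x, μ x • ((F x)ᴴ * G x)) *ᵥ v)
      = ∑ i, weightedInner μ (fun y => (F y *ᵥ v) i) (fun y => (G y *ᵥ v) i) := by
  calc star v ⬝ᵥ ((∑ x, μ x • ((F x)ᴴ * G x)) *ᵥ v)
      = ∑ x, (μ x : ℂ) * (star (F x *ᵥ v) ⬝ᵥ (G x *ᵥ v)) := by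
        simp [sum_mulVec, dotProduct_sum, smul_mulVec, ← mulVec_mulVec, dotProduct_mulVec,
          star_mulVec, Complex.real_smul]
    _ = _ := by
        simp only [weightedInner, dotProduct, Finset.mul_sum, Pi.star_apply, Complex.star_def,
          mul_assoc]
        exact Finset.sum_comm

theorem scalar_poincare_implies_matrix_poincare_finite_general
    {Ω : Type*} [Fintype Ω] (μ : Ω → ℝ)
    (A : (Ω → ℂ) →ₗ[ℂ] (Ω → ℂ))
    (α : ℝ)
    (hpoinc : ∀ f : Ω → ℂ, ∑ x, (μ x : ℂ) * f x = 0 →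
      ∑ x, (μ x : ℂ) * (starRingEnd ℂ) (f x) * f x
        ≤ (α : ℂ) * ∑ x, (μ x : ℂ) * (starRingEnd ℂ) (f x) * A f x)
    (d : ℕ)
    (F : Ω → Matrix (Fin d) (Fin d) ℂ)
    (hF : ∀ i j, ∑ x, (μ x : ℂ) * F x i j = 0) :
    (α • ∑ x, μ x • ((F x)ᴴ * Matrix.of fun i j => A (fun y => F y i j) x)
      - ∑ x, μ x • ((F x)ᴴ * F x)).PosSemidef := by
  refine .of_dotProduct_mulVec_nonneg_complex fun v => ?_
  simp only [sub_mulVec, dotProduct_sub, smul_mulVec, dotProduct_smul, Complex.real_smul,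
    star_dotProduct_sum_smul_conjTranspose_mul_mulVec, of_apply_entrywise_mulVec_apply]
  rw [Finset.mul_sum, ← Finset.sum_sub_distrib]
  exact Finset.sum_nonneg fun i _ =>
    sub_nonneg.mpr (hpoinc _ (sum_mul_mulVec_apply_eq_zero _ hF v i))

/-- **Scalar Poincaré implies matrix Poincaré, finite case.**
If `A` is a linear operator on the mean-zero subspace of `Ω → ℂ` (w.r.t. the
strictly positive probability measure `μ`) which is self-adjoint for the
weighted inner product and satisfies the scalar Poincaré inequality
`α⟨f, Af⟩ ≥ ⟨f, f⟩`, then the matrix Poincaré inequality holds for any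
matrix-valued function `F` with mean-zero entries. -/
theorem scalar_poincare_implies_matrix_poincare_finite
    {Ω : Type*} [Fintype Ω] (μ : Ω → ℝ)
    (hμpos : ∀ x, 0 < μ x) (hμsum : ∑ x, μ x = 1)
    (A : (Ω → ℂ) →ₗ[ℂ] (Ω → ℂ))
    (hAmaps : ∀ f : Ω → ℂ, ∑ x, (μ x : ℂ) * f x = 0 → ∑ x, (μ x : ℂ) * A f x = 0)
    (hAsa : ∀ f g : Ω → ℂ, ∑ x, (μ x : ℂ) * f x = 0 → ∑ x, (μ x : ℂ) * g x = 0 →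
      ∑ x, (μ x : ℂ) * (starRingEnd ℂ) (A f x) * g x
        = ∑ x, (μ x : ℂ) * (starRingEnd ℂ) (f x) * A g x)
    (α : ℝ) (hα : 0 < α)
    (hpoinc : ∀ f : Ω → ℂ, ∑ x, (μ x : ℂ) * f x = 0 →
      ∑ x, (μ x : ℂ) * (starRingEnd ℂ) (f x) * f x
        ≤ (α : ℂ) * ∑ x, (μ x : ℂ) * (starRingEnd ℂ) (f x) * A f x)
    (d : ℕ) (hd : 1 ≤ d)
    (F : Ω → Matrix (Fin d) (Fin d) ℂ)
    (hF : ∀ i j, ∑ x, (μ x : ℂ) * F x i j = 0) :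
    (α • ∑ x, μ x • ((F x)ᴴ * Matrix.of fun i j => A (fun y => F y i j) x)
      - ∑ x, μ x • ((F x)ᴴ * F x)).PosSemidef :=
  scalar_poincare_implies_matrix_poincare_finite_general μ A α hpoinc d F hF
end

section
/- Let Ω be a finite set, μ a strictly positive probability measure on Ω, and A a linear operator on H = {f : Ω → ℂ : ∑_x μ(x) f(x) = 0} that is self-adjoint with respect to the weighted inner product ⟨f, g⟩ = ∑_x μ(x) conj(f(x)) g(x), satisfying α⟨f, A f⟩ ≥ ⟨f, f⟩ for all f ∈ H. Then for every d ≥ 1 and every function F : Ω → H_d taking values in the d×d Hermitian matrices, with each entry of F lying in H, one has α · ∑_{x∈Ω} μ(x) F(x) (A F)(x) ⪰ ∑_{x∈Ω} μ(x) F(x)², where A F is defined entrywise. -/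
/-!
Fix `v ∈ ℂᵈ` and put `f_k(x) = (F(x) v)_k`. Each `f_k` has mean zero, and since `A` acts
entrywise it commutes with multiplication by the constant vector `v`, so `(A F)(x) v` has
components `(A f_k)(x)`. As `F(x)` is Hermitian, `v* F(x) G(x) v = (F(x) v)* (G(x) v)`, hence
`v* (α ∑ μ F (AF) - ∑ μ F²) v = ∑_k (α ⟨f_k, A f_k⟩ - ⟨f_k, f_k⟩) ≥ 0` by the scalar
Poincaré inequality. Over `ℂ` a matrix with real quadratic form is Hermitian (polarization),
so this is positive semidefiniteness.
-/

open Matrix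
open scoped ComplexOrder

namespace Matrix

theorem PosSemidef.of_dotProduct_mulVec_nonneg_complex_s1 {n : Type*} [Fintype n]
    {M : Matrix n n ℂ} (hM : ∀ x, 0 ≤ star x ⬝ᵥ (M *ᵥ x)) : M.PosSemidef := by
  classical
  rw [← isPositive_toEuclideanLin_iff, LinearMap.isPositive_iff_complex]
  intro x
  have hx : x.ofLp ⬝ᵥ star (M *ᵥ x.ofLp) = star (star x.ofLp ⬝ᵥ (M *ᵥ x.ofLp)) := by
    rw [star_dotProduct, star_star, dotProduct_comm]
  obtain ⟨hre, him⟩ := Complex.nonneg_iff.mp (hM x.ofLp)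
  simp only [EuclideanSpace.inner_eq_star_dotProduct, ofLp_toLpLin, toLin'_apply, hx]
  exact ⟨Complex.ext (by simp) (by simp [← him]), by simpa using hre⟩

theorem IsHermitian.star_dotProduct_mul_mulVec {R n : Type*} [Fintype n] [CommRing R]
    [StarRing R] {M : Matrix n n R} (hM : M.IsHermitian) (N : Matrix n n R) (v : n → R) :
    star v ⬝ᵥ ((M * N) *ᵥ v) = star (M *ᵥ v) ⬝ᵥ (N *ᵥ v) := by
  rw [← mulVec_mulVec, dotProduct_mulVec, star_mulVec, hM.eq]

theorem of_linearMap_apply_mulVec {R Ω m n : Type*} [CommSemiring R] [Fintype n]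
    (A : (Ω → R) →ₗ[R] (Ω → R)) (F : Ω → Matrix m n R) (v : n → R) (x : Ω) :
    (of fun i j => A (fun y => F y i j) x) *ᵥ v = fun i => A (fun y => (F y *ᵥ v) i) x := by
  ext i
  have hrow : (fun y => (F y *ᵥ v) i) = ∑ j, v j • fun y => F y i j := by
    ext y
    simp [mulVec, dotProduct, mul_comm]
  rw [hrow, map_sum]
  simp [mulVec, dotProduct, mul_comm]

end Matrix

section WeightedSums

variable {Ω n : Type*} [Fintype Ω] [Fintype n] (μ : Ω → ℝ)

theorem sum_ofReal_mul_mulVec_apply_eq_zero {m : Type*} {F : Ω → Matrix m n ℂ}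
    (hF : ∀ i j, ∑ x, (μ x : ℂ) * F x i j = 0) (v : n → ℂ) (i : m) :
    ∑ x, (μ x : ℂ) * (F x *ᵥ v) i = 0 := by
  simp only [mulVec, dotProduct, Finset.mul_sum, ← mul_assoc]
  rw [Finset.sum_comm]
  simp [← Finset.sum_mul, hF]

theorem star_dotProduct_sum_smul_mul_mulVec {F : Ω → Matrix n n ℂ}
    (hF : ∀ x, (F x).IsHermitian) (G : Ω → Matrix n n ℂ) (v : n → ℂ) :
    star v ⬝ᵥ ((∑ x, μ x • (F x * G x)) *ᵥ v)
      = ∑ k, ∑ x, (μ x : ℂ) * starRingEnd ℂ ((F x *ᵥ v) k) * (G x *ᵥ v) k := by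
  simp only [sum_mulVec, smul_mulVec, dotProduct_sum, dotProduct_smul,
    (hF _).star_dotProduct_mul_mulVec]
  rw [Finset.sum_comm]
  simp [dotProduct, Finset.mul_sum, Complex.real_smul, mul_assoc]

end WeightedSums

theorem scalar_poincare_implies_matrix_poincare_hermitian_finite_general
    {Ω : Type*} [Fintype Ω] (μ : Ω → ℝ)
    (A : (Ω → ℂ) →ₗ[ℂ] (Ω → ℂ))
    (α : ℝ)
    (hpoinc : ∀ f : Ω → ℂ, ∑ x, (μ x : ℂ) * f x = 0 →
      ∑ x, (μ x : ℂ) * (starRingEnd ℂ) (f x) * f x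
        ≤ (α : ℂ) * ∑ x, (μ x : ℂ) * (starRingEnd ℂ) (f x) * A f x)
    (d : ℕ)
    (F : Ω → Matrix (Fin d) (Fin d) ℂ)
    (hFherm : ∀ x, (F x).IsHermitian)
    (hF : ∀ i j, ∑ x, (μ x : ℂ) * F x i j = 0) :
    (α • ∑ x, μ x • (F x * Matrix.of fun i j => A (fun y => F y i j) x)
      - ∑ x, μ x • (F x * F x)).PosSemidef := by
  refine PosSemidef.of_dotProduct_mulVec_nonneg_complex_s1 fun v => ?_
  rw [sub_mulVec, dotProduct_sub, smul_mulVec, dotProduct_smul,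
    star_dotProduct_sum_smul_mul_mulVec μ hFherm, star_dotProduct_sum_smul_mul_mulVec μ hFherm]
  simp only [of_linearMap_apply_mulVec]
  rw [Complex.real_smul, Finset.mul_sum, ← Finset.sum_sub_distrib]
  exact Finset.sum_nonneg fun k _ =>
    sub_nonneg.mpr (hpoinc _ (sum_ofReal_mul_mulVec_apply_eq_zero μ hF v k))

/-- **Matrix Poincaré for Hermitian-valued functions, finite case.**
If `A` is self-adjoint on the mean-zero subspace w.r.t. the weighted inner
product given by the strictly positive probability measure `μ` and satisfies
the scalar Poincaré inequality with constant `α`, then for any function `F`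
taking Hermitian matrix values with mean-zero entries,
`α ∑ₓ μ(x) F(x)(AF)(x) ⪰ ∑ₓ μ(x) F(x)²`. -/
theorem scalar_poincare_implies_matrix_poincare_hermitian_finite
    {Ω : Type*} [Fintype Ω] (μ : Ω → ℝ)
    (hμpos : ∀ x, 0 < μ x) (hμsum : ∑ x, μ x = 1)
    (A : (Ω → ℂ) →ₗ[ℂ] (Ω → ℂ))
    (hAmaps : ∀ f : Ω → ℂ, ∑ x, (μ x : ℂ) * f x = 0 → ∑ x, (μ x : ℂ) * A f x = 0)
    (hAsa : ∀ f g : Ω → ℂ, ∑ x, (μ x : ℂ) * f x = 0 → ∑ x, (μ x : ℂ) * g x = 0 →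
      ∑ x, (μ x : ℂ) * (starRingEnd ℂ) (A f x) * g x
        = ∑ x, (μ x : ℂ) * (starRingEnd ℂ) (f x) * A g x)
    (α : ℝ) (hα : 0 < α)
    (hpoinc : ∀ f : Ω → ℂ, ∑ x, (μ x : ℂ) * f x = 0 →
      ∑ x, (μ x : ℂ) * (starRingEnd ℂ) (f x) * f x
        ≤ (α : ℂ) * ∑ x, (μ x : ℂ) * (starRingEnd ℂ) (f x) * A f x)
    (d : ℕ) (hd : 1 ≤ d)
    (F : Ω → Matrix (Fin d) (Fin d) ℂ)
    (hFherm : ∀ x, (F x).IsHermitian)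
    (hF : ∀ i j, ∑ x, (μ x : ℂ) * F x i j = 0) :
    (α • ∑ x, μ x • (F x * Matrix.of fun i j => A (fun y => F y i j) x)
      - ∑ x, μ x • (F x * F x)).PosSemidef :=
  scalar_poincare_implies_matrix_poincare_hermitian_finite_general μ A α hpoinc d F hFherm hF
end
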